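/- The digraph K(n,n−2,1), obtained from the complete digraph K↔_n by deleting a single arc, is the unique digraph achieving the second maximum A_α spectral radius among all strongly connected digraphs on n vertices, and its A_α spectral radius equals (n + αn − 2 − α + √((1−α)²n² + 2α(1−α)n + α² + 4α − 4)) / 2, for all α ∈ [0,1). -/

import Mathlib

open scoped Classical
open Matrix

/-- Spectral radius: largest modulus of (complex) eigenvalues, i.e. roots of the
characteristic polynomial of the complexified matrix. -/
noncomputable def specRad {m : Type*} [Fintype m] [DecidableEq m] (M : Matrix m m ℝ) : ℝ :=
  sSup {r : ℝ | ∃ μ : ℂ, (M.map Complex.ofReal).charpoly.IsRoot μ ∧ r = ‖μ‖}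

/-- Irreducibility of a matrix: the associated digraph is strongly connected. -/
def Irred {n : ℕ} (M : Matrix (Fin n) (Fin n) ℝ) : Prop :=
  ∀ i j : Fin n, Relation.ReflTransGen (fun a b => M a b ≠ 0) i j

/-- Outdegree of a vertex in a digraph on `Fin n`. -/
noncomputable def outdeg {n : ℕ} (G : Fin n → Fin n → Prop) (i : Fin n) : ℕ :=
  (Finset.univ.filter (fun j => G i j)).card

/-- Indegree of a vertex. -/
noncomputable def indeg {n : ℕ} (G : Fin n → Fin n → Prop) (i : Fin n) : ℕ :=
  (Finset.univ.filter (fun j => G j i)).card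

/-- The matrix `A_α(G) = α D(G) + (1-α) A(G)`. -/
noncomputable def Aalpha {n : ℕ} (α : ℝ) (G : Fin n → Fin n → Prop) :
    Matrix (Fin n) (Fin n) ℝ :=
  α • Matrix.diagonal (fun i => (outdeg G i : ℝ)) +
    (1 - α) • (Matrix.of fun i j => if G i j then (1 : ℝ) else 0)

/-- The `A_α` spectral radius of a digraph. -/
noncomputable def lamAlpha {n : ℕ} (α : ℝ) (G : Fin n → Fin n → Prop) : ℝ :=
  specRad (Aalpha α G)

/-- Strong connectivity of a digraph. -/
def SConn {n : ℕ} (G : Fin n → Fin n → Prop) : Prop :=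
  ∀ u v : Fin n, Relation.ReflTransGen G u v

/-- Isomorphism of digraphs on `Fin n`. -/
def DIso {n : ℕ} (G H : Fin n → Fin n → Prop) : Prop :=
  ∃ e : Equiv.Perm (Fin n), ∀ u v, G u v ↔ H (e u) (e v)

/-- The directed cycle on `Fin n`. -/
def dirCycle (n : ℕ) : Fin n → Fin n → Prop :=
  fun i j => j.val = (i.val + 1) % n


/-- Deleting a set of vertices from a digraph. -/
def delVerts {n : ℕ} (G : Fin n → Fin n → Prop) (S : Finset (Fin n)) :
    Fin n → Fin n → Prop :=
  fun a b => G a b ∧ a ∉ S ∧ b ∉ S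

/-- The digraph obtained by deleting the vertices of `S` is strongly connected. -/
def SConnAvoid {n : ℕ} (G : Fin n → Fin n → Prop) (S : Finset (Fin n)) : Prop :=
  ∀ u v : Fin n, u ∉ S → v ∉ S → Relation.ReflTransGen (delVerts G S) u v

/-- The vertex connectivity of `G` equals `k`. -/
def vertexConnIs {n : ℕ} (G : Fin n → Fin n → Prop) (k : ℕ) : Prop :=
  (∃ S : Finset (Fin n), S.card = k ∧ ¬ SConnAvoid G S) ∧
    ∀ S : Finset (Fin n), ¬ SConnAvoid G S → k ≤ S.card

/-- Deleting a set of arcs from a digraph. -/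
def delArcs {n : ℕ} (G : Fin n → Fin n → Prop) (S : Finset (Fin n × Fin n)) :
    Fin n → Fin n → Prop :=
  fun a b => G a b ∧ (a, b) ∉ S

/-- The arc connectivity of `G` equals `k`. -/
def arcConnIs {n : ℕ} (G : Fin n → Fin n → Prop) (k : ℕ) : Prop :=
  (∃ S : Finset (Fin n × Fin n), S.card = k ∧ ¬ SConn (delArcs G S)) ∧
    ∀ S : Finset (Fin n × Fin n), ¬ SConn (delArcs G S) → k ≤ S.card

/-- `G` contains a directed cycle of length `g`. -/
def hasCycleLen {n : ℕ} (G : Fin n → Fin n → Prop) (g : ℕ) : Prop :=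
  ∃ c : Fin g → Fin n, Function.Injective c ∧
    ∀ i : Fin g, G (c i) (c ⟨(i.val + 1) % g, Nat.mod_lt _ i.pos⟩)

/-- The girth of `G` equals `g`. -/
def girthIs {n : ℕ} (G : Fin n → Fin n → Prop) (g : ℕ) : Prop :=
  hasCycleLen G g ∧ ∀ m, 0 < m → m < g → ¬ hasCycleLen G m

/-- The clique number of `G` equals `d`. -/
def cliqueNumIs {n : ℕ} (G : Fin n → Fin n → Prop) (d : ℕ) : Prop :=
  (∃ S : Finset (Fin n), S.card = d ∧ ∀ u ∈ S, ∀ v ∈ S, u ≠ v → G u v ∧ G v u) ∧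
    ∀ S : Finset (Fin n), (∀ u ∈ S, ∀ v ∈ S, u ≠ v → G u v ∧ G v u) → S.card ≤ d

/-- The digraph `C_{n,g}`: the directed cycle `v_1 … v_g v_1` (indices `0,…,g-1`)
together with the directed path `v_g v_{g+1} … v_n v_1`. -/
def Cng (n g : ℕ) : Fin n → Fin n → Prop := fun i j =>
  j.val = i.val + 1 ∨ (i.val = g - 1 ∧ j.val = 0) ∨ (i.val = n - 1 ∧ j.val = 0)

/-- `C'_{n,g} = C_{n,g} - {(v_n, v_1)} + {(v_n, v_g)}`. -/
def Cng' (n g : ℕ) : Fin n → Fin n → Prop := fun i j =>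
  j.val = i.val + 1 ∨ (i.val = g - 1 ∧ j.val = 0) ∨ (i.val = n - 1 ∧ j.val = g - 1)

/-- The digraph `B_{n,d}`: a complete digraph on the `d` vertices
`{0} ∪ {n-d+1, …, n-1}` together with the directed path `v_1 v_2 … v_{n-d+2}`
(indices `0, 1, …, n-d+1`). -/
def Bnd (n d : ℕ) : Fin n → Fin n → Prop := fun i j =>
  (j.val = i.val + 1 ∧ j.val ≤ n - d + 1) ∨
    (i ≠ j ∧ (i.val = 0 ∨ n - d + 1 ≤ i.val) ∧ (j.val = 0 ∨ n - d + 1 ≤ j.val))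

/-- `B'_{n,d} = B_{n,d} - {(v_{n-d+1}, v_{n-d+2})} + {(v_{n-d+1}, v_1)}`. -/
def Bnd' (n d : ℕ) : Fin n → Fin n → Prop := fun i j =>
  (j.val = i.val + 1 ∧ j.val ≤ n - d) ∨ (i.val = n - d ∧ j.val = 0) ∨
    (i ≠ j ∧ (i.val = 0 ∨ n - d + 1 ≤ i.val) ∧ (j.val = 0 ∨ n - d + 1 ≤ j.val))

/-- The digraph `K(n,k,m)`: parts `K_m` (indices `< m`), `K_k` (indices in `[m, m+k)`),
`K_{n-k-m}` (indices `≥ m+k`); all parts complete, `K_k` joined both ways to the others,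
and all one-way arcs from `K_m` to `K_{n-k-m}`. -/
def Knkm (n k m : ℕ) : Fin n → Fin n → Prop := fun i j =>
  i ≠ j ∧ ¬(m + k ≤ i.val ∧ j.val < m)

/-!
Relabel a loopless non-complete digraph `G` so that one of its missing arcs becomes the arc
`(n - 1, 0)` missing from `K(n,n-2,1)`; then `A_α(G) ≤ N := A_α(K(n,n-2,1))` entrywise. `N` is
irreducible and has a positive eigenvector `y` whose eigenvalue is the closed form. Comparing the
entrywise modulus of any eigenvector of `A_α(G)` with `y` (Collatz–Wielandt) bounds the spectral
radius of `A_α(G)`; in the equality case that modulus is a multiple of `y`, which forces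
`A_α(G) = N`, i.e. `G ≅ K(n,n-2,1)`.
-/

open Polynomial

section SpectralRadius

variable {m : Type*} [Fintype m] [DecidableEq m]

theorem isRoot_charpoly_iff_exists_mulVec_eq_smul {K : Type*} [Field K] (M : Matrix m m K)
    (μ : K) : M.charpoly.IsRoot μ ↔ ∃ v ≠ 0, M *ᵥ v = μ • v := by
  have hscalar (v : m → K) : scalar m μ *ᵥ v = μ • v := by ext; simp [mulVec_diagonal]
  rw [IsRoot.def, eval_charpoly, ← exists_mulVec_eq_zero_iff]
  simp only [sub_mulVec, hscalar, sub_eq_zero, eq_comm]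

theorem specRad_eq_sSup_image (M : Matrix m m ℝ) :
    specRad M = sSup ((‖·‖) '' {μ : ℂ | (M.map Complex.ofReal).charpoly.IsRoot μ}) := by
  unfold specRad
  congr 1
  ext r
  simp [eq_comm]

theorem finite_setOf_isRoot_charpoly (M : Matrix m m ℂ) :
    {μ : ℂ | M.charpoly.IsRoot μ}.Finite :=
  finite_setOfPred_isRoot M.charpoly_monic.ne_zero

theorem nonempty_setOf_isRoot_charpoly [Nonempty m] (M : Matrix m m ℂ) :
    {μ : ℂ | M.charpoly.IsRoot μ}.Nonempty := by
  refine IsAlgClosed.exists_root _ ?_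
  rw [degree_eq_natDegree M.charpoly_monic.ne_zero, charpoly_natDegree_eq_dim]
  exact_mod_cast Fintype.card_ne_zero

theorem specRad_le [Nonempty m] {M : Matrix m m ℝ} {ρ : ℝ}
    (h : ∀ (μ : ℂ) (x : m → ℂ), x ≠ 0 → M.map Complex.ofReal *ᵥ x = μ • x → ‖μ‖ ≤ ρ) :
    specRad M ≤ ρ := by
  rw [specRad_eq_sSup_image]
  refine csSup_le ((nonempty_setOf_isRoot_charpoly _).image _) ?_
  rintro _ ⟨μ, hμ, rfl⟩
  obtain ⟨x, hx, hMx⟩ := (isRoot_charpoly_iff_exists_mulVec_eq_smul _ μ).1 hμ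
  exact h μ x hx hMx

theorem exists_mulVec_eq_smul_norm_eq_specRad [Nonempty m] (M : Matrix m m ℝ) :
    ∃ (μ : ℂ) (x : m → ℂ), x ≠ 0 ∧ M.map Complex.ofReal *ᵥ x = μ • x ∧ ‖μ‖ = specRad M := by
  have hmem := ((nonempty_setOf_isRoot_charpoly _).image (‖·‖)).csSup_mem
    ((finite_setOf_isRoot_charpoly (M.map Complex.ofReal)).image (‖·‖))
  rw [← specRad_eq_sSup_image] at hmem
  obtain ⟨μ, hμ, hnorm⟩ := hmem
  obtain ⟨x, hx, hMx⟩ := (isRoot_charpoly_iff_exists_mulVec_eq_smul _ μ).1 hμ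
  exact ⟨μ, x, hx, hMx, hnorm⟩

theorem le_specRad_of_mulVec_eq_smul {M : Matrix m m ℝ} {ρ : ℝ} {y : m → ℝ} (hy : y ≠ 0)
    (hMy : M *ᵥ y = ρ • y) : ρ ≤ specRad M := by
  have hroot : M.charpoly.IsRoot ρ := (isRoot_charpoly_iff_exists_mulVec_eq_smul M ρ).2 ⟨y, hy, hMy⟩
  have hroot' : (M.map Complex.ofReal).charpoly.IsRoot ρ := by
    have h := hroot.map (f := Complex.ofRealHom)
    rwa [← charpoly_map] at h
  rw [specRad_eq_sSup_image]
  refine (le_abs_self ρ).trans (le_csSup ((finite_setOf_isRoot_charpoly _).image _).bddAbove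
    ⟨ρ, hroot', ?_⟩)
  simp

theorem specRad_submatrix_equiv (M : Matrix m m ℝ) (e : m ≃ m) :
    specRad (M.submatrix e e) = specRad M := by
  rw [specRad_eq_sSup_image, specRad_eq_sSup_image,
    show (M.submatrix e e).map Complex.ofReal = reindex e.symm e.symm (M.map Complex.ofReal)
      from rfl, charpoly_reindex]

end SpectralRadius

section PerronComparison

variable {m : Type*} [Fintype m]

theorem norm_mul_norm_le_mulVec_norm {M : Matrix m m ℝ} (hM : ∀ i j, 0 ≤ M i j) {μ : ℂ}
    {x : m → ℂ} (hMx : M.map Complex.ofReal *ᵥ x = μ • x) (i : m) :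
    ‖μ‖ * ‖x i‖ ≤ (M *ᵥ fun j => ‖x j‖) i :=
  calc ‖μ‖ * ‖x i‖ = ‖(M.map Complex.ofReal *ᵥ x) i‖ := by rw [hMx]; simp
  _ ≤ ∑ j, ‖(M i j : ℂ) * x j‖ := norm_sum_le _ _
  _ = (M *ᵥ fun j => ‖x j‖) i := by simp [mulVec, dotProduct, abs_of_nonneg (hM i _)]

theorem mulVec_apply_mono_left {M N : Matrix m m ℝ} (hMN : ∀ i j, M i j ≤ N i j) {z : m → ℝ}
    (hz : ∀ j, 0 ≤ z j) (i : m) : (M *ᵥ z) i ≤ (N *ᵥ z) i :=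
  Finset.sum_le_sum fun j _ => mul_le_mul_of_nonneg_right (hMN i j) (hz j)

theorem mulVec_apply_mono_right {N : Matrix m m ℝ} (hN : ∀ i j, 0 ≤ N i j) {z w : m → ℝ}
    (hzw : ∀ j, z j ≤ w j) (i : m) : (N *ᵥ z) i ≤ (N *ᵥ w) i :=
  Finset.sum_le_sum fun j _ => mul_le_mul_of_nonneg_left (hzw j) (hN i j)

variable {N : Matrix m m ℝ} {y z : m → ℝ} {ρ : ℝ}

theorem exists_le_smul_of_pos [Nonempty m] (hy : ∀ i, 0 < y i) (z : m → ℝ) :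
    ∃ (t : ℝ) (i₀ : m), z i₀ = t * y i₀ ∧ ∀ i, z i ≤ t * y i := by
  obtain ⟨i₀, hi₀⟩ := Finite.exists_max fun i => z i / y i
  refine ⟨z i₀ / y i₀, i₀, (div_mul_cancel₀ _ (hy i₀).ne').symm, fun i => ?_⟩
  rw [← div_le_iff₀ (hy i)]
  exact hi₀ i

theorem mulVec_apply_le_of_le_smul (hN : ∀ i j, 0 ≤ N i j) (hNy : N *ᵥ y = ρ • y) {t : ℝ}
    (hzy : ∀ j, z j ≤ t * y j) (i : m) : (N *ᵥ z) i ≤ ρ * (t * y i) := by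
  calc (N *ᵥ z) i ≤ (N *ᵥ (t • y)) i := mulVec_apply_mono_right hN hzy i
  _ = ρ * (t * y i) := by rw [mulVec_smul, hNy]; simp only [Pi.smul_apply, smul_eq_mul]; ring

/-- Collatz–Wielandt: compare `r z ≤ N z ≤ t N y = ρ t y` at an index where `z / y = t` is
maximal. -/
theorem le_of_smul_le_mulVec (hN : ∀ i j, 0 ≤ N i j) (hy : ∀ i, 0 < y i)
    (hNy : N *ᵥ y = ρ • y) (hz0 : ∀ i, 0 ≤ z i) (hz : z ≠ 0) {r : ℝ}
    (hr : ∀ i, r * z i ≤ (N *ᵥ z) i) : r ≤ ρ := by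
  obtain ⟨i₁, hi₁⟩ := Function.ne_iff.1 hz
  have : Nonempty m := ⟨i₁⟩
  obtain ⟨t, i₀, hi₀, hzy⟩ := exists_le_smul_of_pos hy z
  have ht : 0 < t := pos_of_mul_pos_left
    (((hz0 i₁).lt_of_ne' hi₁).trans_le (hzy i₁)) (hy i₁).le
  have hzi₀ : 0 < z i₀ := hi₀ ▸ mul_pos ht (hy i₀)
  refine le_of_mul_le_mul_right ?_ hzi₀
  calc r * z i₀ ≤ (N *ᵥ z) i₀ := hr i₀
  _ ≤ ρ * z i₀ := hi₀ ▸ mulVec_apply_le_of_le_smul hN hNy hzy i₀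

theorem eq_mul_of_adj_of_le_smul (hN : ∀ i j, 0 ≤ N i j) (hNy : N *ᵥ y = ρ • y) {t : ℝ}
    (hzy : ∀ j, z j ≤ t * y j) {i j : m} (hρz : ρ * z i ≤ (N *ᵥ z) i) (hi : z i = t * y i)
    (hij : N i j ≠ 0) : z j = t * y j := by
  have hsum : ∑ k, N i k * z k = ∑ k, N i k * (t * y k) := by
    refine le_antisymm (mulVec_apply_mono_right hN hzy i) ?_
    calc ∑ k, N i k * (t * y k) = (N *ᵥ (t • y)) i := rfl
    _ = ρ * z i := by rw [mulVec_smul, hNy, hi]; simp only [Pi.smul_apply, smul_eq_mul]; ring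
    _ ≤ ∑ k, N i k * z k := hρz
  have := (Finset.sum_eq_sum_iff_of_le fun k _ =>
    mul_le_mul_of_nonneg_left (hzy k) (hN i k)).1 hsum j (Finset.mem_univ j)
  exact mul_left_cancel₀ hij this

/-- The set of indices where `z / y` is maximal is closed under the arcs of `N`. -/
theorem exists_pos_eq_smul_of_smul_le_mulVec (hN : ∀ i j, 0 ≤ N i j) (hy : ∀ i, 0 < y i)
    (hNy : N *ᵥ y = ρ • y) (hirr : ∀ i j, Relation.ReflTransGen (fun a b => N a b ≠ 0) i j)
    (hz0 : ∀ i, 0 ≤ z i) (hz : z ≠ 0) (hρz : ∀ i, ρ * z i ≤ (N *ᵥ z) i) :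
    ∃ t : ℝ, 0 < t ∧ z = t • y := by
  obtain ⟨i₁, hi₁⟩ := Function.ne_iff.1 hz
  have : Nonempty m := ⟨i₁⟩
  obtain ⟨t, i₀, hi₀, hzy⟩ := exists_le_smul_of_pos hy z
  have heq (i : m) : z i = t * y i := by
    induction hirr i₀ i with
    | refl => exact hi₀
    | tail _ hab ih => exact eq_mul_of_adj_of_le_smul hN hNy hzy (hρz _) ih hab
  refine ⟨t, pos_of_mul_pos_left (heq i₁ ▸ (hz0 i₁).lt_of_ne' hi₁) (hy i₁).le, funext heq⟩

variable [DecidableEq m] [Nonempty m] {M : Matrix m m ℝ}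

theorem specRad_le_of_le (hM : ∀ i j, 0 ≤ M i j) (hMN : ∀ i j, M i j ≤ N i j)
    (hy : ∀ i, 0 < y i) (hNy : N *ᵥ y = ρ • y) : specRad M ≤ ρ := by
  refine specRad_le fun μ x hx hMx => ?_
  refine le_of_smul_le_mulVec (fun i j => (hM i j).trans (hMN i j)) hy hNy
    (z := fun j => ‖x j‖) (fun _ => norm_nonneg _) ?_ fun i => ?_
  · simpa [funext_iff] using hx
  · exact (norm_mul_norm_le_mulVec_norm hM hMx i).trans
      (mulVec_apply_mono_left hMN (fun _ => norm_nonneg _) i)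

theorem eq_of_le_of_specRad_eq (hM : ∀ i j, 0 ≤ M i j) (hMN : ∀ i j, M i j ≤ N i j)
    (hy : ∀ i, 0 < y i) (hNy : N *ᵥ y = ρ • y)
    (hirr : ∀ i j, Relation.ReflTransGen (fun a b => N a b ≠ 0) i j) (h : specRad M = ρ) :
    M = N := by
  have hN (i j : m) : 0 ≤ N i j := (hM i j).trans (hMN i j)
  obtain ⟨μ, x, hx, hMx, hμ⟩ := exists_mulVec_eq_smul_norm_eq_specRad M
  set z : m → ℝ := fun j => ‖x j‖
  have hz0 (j : m) : 0 ≤ z j := norm_nonneg _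
  have hρz (i : m) : ρ * z i ≤ (M *ᵥ z) i := h ▸ hμ ▸ norm_mul_norm_le_mulVec_norm hM hMx i
  obtain ⟨t, ht, hzt⟩ := exists_pos_eq_smul_of_smul_le_mulVec hN hy hNy hirr hz0
    (by simpa [z, funext_iff] using hx) fun i => (hρz i).trans (mulVec_apply_mono_left hMN hz0 i)
  have hzpos (j : m) : 0 < z j := by rw [hzt]; exact mul_pos ht (hy j)
  have hNz : N *ᵥ z = ρ • z := by rw [hzt, mulVec_smul, hNy, smul_comm]
  ext i j
  have hsum : ∑ k, M i k * z k = ∑ k, N i k * z k := by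
    refine le_antisymm (mulVec_apply_mono_left hMN hz0 i) ?_
    calc ∑ k, N i k * z k = ρ * z i := congrFun hNz i
    _ ≤ ∑ k, M i k * z k := hρz i
  have := (Finset.sum_eq_sum_iff_of_le fun k _ =>
    mul_le_mul_of_nonneg_right (hMN i k) (hz0 k)).1 hsum j (Finset.mem_univ j)
  exact mul_right_cancel₀ (hzpos j).ne' this

end PerronComparison

section AlphaMatrix

variable {n : ℕ} {α : ℝ}

theorem Aalpha_apply (α : ℝ) (G : Fin n → Fin n → Prop) (i j : Fin n) :
    Aalpha α G i j =
      α * (if i = j then (outdeg G i : ℝ) else 0) + (1 - α) * (if G i j then 1 else 0) := by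
  simp [Aalpha, diagonal_apply]

theorem Aalpha_apply_of_ne (G : Fin n → Fin n → Prop) {i j : Fin n} (hij : i ≠ j) :
    Aalpha α G i j = (1 - α) * if G i j then 1 else 0 := by
  simp [Aalpha_apply, hij]

theorem Aalpha_nonneg (hα0 : 0 ≤ α) (hα1 : α ≤ 1) (G : Fin n → Fin n → Prop) (i j : Fin n) :
    0 ≤ Aalpha α G i j := by
  have : 0 ≤ 1 - α := sub_nonneg.2 hα1
  rw [Aalpha_apply]
  positivity

theorem Aalpha_pos_of_adj (hα0 : 0 ≤ α) (hα1 : α < 1) {G : Fin n → Fin n → Prop} {i j : Fin n}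
    (h : G i j) : 0 < Aalpha α G i j := by
  have : 0 < 1 - α := sub_pos.2 hα1
  rw [Aalpha_apply, if_pos h, mul_one]
  positivity

theorem irred_Aalpha (hα0 : 0 ≤ α) (hα1 : α < 1) {G : Fin n → Fin n → Prop} (hG : SConn G) :
    Irred (Aalpha α G) :=
  fun i j =>
    Relation.ReflTransGen.mono (fun _ _ h => (Aalpha_pos_of_adj hα0 hα1 h).ne') _ _ (hG i j)

theorem outdeg_mono {G H : Fin n → Fin n → Prop} (hGH : ∀ i j, G i j → H i j) (i : Fin n) :
    outdeg G i ≤ outdeg H i :=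
  Finset.card_le_card fun j => by simpa using hGH i j

theorem Aalpha_mono (hα0 : 0 ≤ α) (hα1 : α ≤ 1) {G H : Fin n → Fin n → Prop}
    (hGH : ∀ i j, G i j → H i j) (i j : Fin n) : Aalpha α G i j ≤ Aalpha α H i j := by
  have : 0 ≤ 1 - α := sub_nonneg.2 hα1
  rw [Aalpha_apply, Aalpha_apply]
  gcongr
  · split_ifs
    · exact_mod_cast outdeg_mono hGH i
    · exact le_rfl
  · by_cases hG : G i j
    · simp [hG, hGH i j hG]
    · simp only [hG, if_false]
      split_ifs <;> norm_num

theorem eq_of_Aalpha_eq (hα1 : α ≠ 1) {G H : Fin n → Fin n → Prop} (hG : ∀ i, ¬G i i)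
    (hH : ∀ i, ¬H i i) (h : Aalpha α G = Aalpha α H) : G = H := by
  ext i j
  by_cases hij : i = j
  · subst hij
    exact iff_of_false (hG i) (hH i)
  have hentry := congrFun (congrFun h i) j
  rw [Aalpha_apply_of_ne G hij, Aalpha_apply_of_ne H hij,
    mul_right_inj' (sub_ne_zero.2 hα1.symm)] at hentry
  by_cases hGij : G i j <;> by_cases hHij : H i j <;> simp_all

theorem outdeg_comp_perm (G : Fin n → Fin n → Prop) (e : Equiv.Perm (Fin n)) (i : Fin n) :
    outdeg (fun a b => G (e a) (e b)) i = outdeg G (e i) :=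
  Finset.card_equiv e fun j => by simp

theorem Aalpha_comp_perm (α : ℝ) (G : Fin n → Fin n → Prop) (e : Equiv.Perm (Fin n)) :
    Aalpha α (fun a b => G (e a) (e b)) = (Aalpha α G).submatrix e e := by
  ext i j
  simp [Aalpha_apply, outdeg_comp_perm]

theorem lamAlpha_comp_perm (α : ℝ) (G : Fin n → Fin n → Prop) (e : Equiv.Perm (Fin n)) :
    lamAlpha α (fun a b => G (e a) (e b)) = lamAlpha α G := by
  rw [lamAlpha, Aalpha_comp_perm, specRad_submatrix_equiv, lamAlpha]

theorem DIso.lamAlpha_eq {G H : Fin n → Fin n → Prop} (h : DIso G H) :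
    lamAlpha α G = lamAlpha α H := by
  obtain ⟨e, he⟩ := h
  rw [← lamAlpha_comp_perm α H e]
  congr
  ext u v
  exact he u v

theorem Aalpha_mulVec_apply (α : ℝ) (G : Fin n → Fin n → Prop) (y : Fin n → ℝ) (i : Fin n) :
    (Aalpha α G *ᵥ y) i =
      α * outdeg G i * y i + (1 - α) * ∑ j ∈ Finset.univ.filter (G i ·), y j := by
  simp [Aalpha, mulVec, dotProduct, add_mul, Finset.sum_add_distrib, diagonal_apply,
    Finset.sum_filter, Finset.mul_sum, mul_assoc]

end AlphaMatrix

section CompleteMinusArc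

variable {n : ℕ}

theorem Knkm_sub_two_one_iff (hn : 2 ≤ n) {i j : Fin n} :
    Knkm n (n - 2) 1 i j ↔ i ≠ j ∧ ¬(i.val = n - 1 ∧ j.val = 0) := by
  have := i.isLt
  simp only [Knkm]
  constructor <;> rintro ⟨hij, h⟩ <;> refine ⟨hij, fun ⟨hi, hj⟩ => h ⟨by omega, by omega⟩⟩

theorem sConn_Knkm (hn : 3 ≤ n) : SConn (Knkm n (n - 2) 1) := by
  intro i j
  by_cases hij : i = j
  · exact hij ▸ .refl
  by_cases harc : i.val = n - 1 ∧ j.val = 0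
  · let k : Fin n := ⟨1, by omega⟩
    have hk : k.val = 1 := rfl
    have hik : Knkm n (n - 2) 1 i k := (Knkm_sub_two_one_iff (by omega)).2
      ⟨fun h => by rw [Fin.ext_iff] at h; omega, by omega⟩
    have hkj : Knkm n (n - 2) 1 k j := (Knkm_sub_two_one_iff (by omega)).2
      ⟨fun h => by rw [Fin.ext_iff] at h; omega, by omega⟩
    exact .tail (.single hik) hkj
  · exact .single ((Knkm_sub_two_one_iff (by omega)).2 ⟨hij, harc⟩)

theorem filter_Knkm_of_ne (hn : 2 ≤ n) {i : Fin n} (hi : i.val ≠ n - 1) :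
    Finset.univ.filter (Knkm n (n - 2) 1 i ·) = Finset.univ.erase i := by
  ext j
  simp [Knkm_sub_two_one_iff hn, hi, eq_comm]

theorem filter_Knkm_of_eq (hn : 2 ≤ n) {i j₀ : Fin n} (hi : i.val = n - 1) (hj₀ : j₀.val = 0) :
    Finset.univ.filter (Knkm n (n - 2) 1 i ·) = (Finset.univ.erase i).erase j₀ := by
  ext j
  simp only [Finset.mem_filter, Finset.mem_univ, true_and, Finset.mem_erase, and_true,
    Knkm_sub_two_one_iff hn, hi]
  omega

theorem Aalpha_Knkm_mulVec_eq_smul (hn : 3 ≤ n) {α ρ : ℝ}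
    (hρ : ρ ^ 2 - (n + α * n - 2 - α) * ρ + (α * n - 1) * (n - 2) = 0) :
    Aalpha α (Knkm n (n - 2) 1) *ᵥ
        (fun i => if i.val = n - 1 then (1 - α) * (n - 2) else ρ - α * (n - 2)) =
      ρ • fun i => if i.val = n - 1 then (1 - α) * (n - 2) else ρ - α * (n - 2) := by
  set b : ℝ := ρ - α * (n - 2)
  set c : ℝ := (1 - α) * (n - 2)
  set y : Fin n → ℝ := fun i => if i.val = n - 1 then c else b
  let last : Fin n := ⟨n - 1, by omega⟩
  let first : Fin n := ⟨0, by omega⟩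
  have hy_of_ne {i : Fin n} (hi : i.val ≠ n - 1) : y i = b := if_neg hi
  have hfirst : y first = b := hy_of_ne (by simp only [first]; omega)
  have hsum : ∑ j, y j = (n - 1) * b + c := by
    rw [← Finset.add_sum_erase _ _ (Finset.mem_univ last),
      Finset.sum_congr rfl fun j hj => hy_of_ne fun h => Finset.ne_of_mem_erase hj (Fin.ext h),
      Finset.sum_const, Finset.card_erase_of_mem (Finset.mem_univ _), Finset.card_univ,
      Fintype.card_fin, nsmul_eq_mul, Nat.cast_pred (by omega)]
    simp only [y, last, if_pos]
    ring
  have hcast : ((n - 1 - 1 : ℕ) : ℝ) = n - 2 := by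
    rw [Nat.cast_sub (by omega), Nat.cast_pred (by omega)]
    ring
  ext i
  rw [Aalpha_mulVec_apply, outdeg, Pi.smul_apply, smul_eq_mul]
  by_cases hi : i.val = n - 1
  · have hi_first : first ∈ Finset.univ.erase i :=
      Finset.mem_erase.2 ⟨fun h => by rw [Fin.ext_iff] at h; simp only [first] at h; omega,
        Finset.mem_univ _⟩
    rw [filter_Knkm_of_eq (by omega) hi (j₀ := first) rfl, Finset.sum_erase_eq_sub hi_first,
      Finset.sum_erase_eq_sub (Finset.mem_univ _), Finset.card_erase_of_mem hi_first,
      Finset.card_erase_of_mem (Finset.mem_univ _), Finset.card_univ, Fintype.card_fin, hsum,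
      hfirst, hcast]
    simp only [y, if_pos hi]
    ring
  · rw [filter_Knkm_of_ne (by omega) hi, Finset.sum_erase_eq_sub (Finset.mem_univ _),
      Finset.card_erase_of_mem (Finset.mem_univ _), Finset.card_univ, Fintype.card_fin, hsum,
      hy_of_ne hi, Nat.cast_pred (by omega)]
    linear_combination -hρ

end CompleteMinusArc

theorem Equiv.Perm.exists_apply_eq_and_apply_eq {β : Type*} [DecidableEq β] {u v u' v' : β}
    (huv : u ≠ v) (huv' : u' ≠ v') : ∃ e : Equiv.Perm β, e u = u' ∧ e v = v' := by
  let w := Equiv.swap u u' v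
  have hw : w ≠ u' := fun h =>
    huv ((Equiv.swap u u').injective (h.trans (Equiv.swap_apply_left _ _).symm)).symm
  refine ⟨(Equiv.swap u u').trans (Equiv.swap w v'), ?_, Equiv.swap_apply_left _ _⟩
  simp only [Equiv.trans_apply, Equiv.swap_apply_left]
  exact Equiv.swap_apply_of_ne_of_ne hw.symm huv'

theorem exists_perm_map_Knkm {n : ℕ} (hn : 2 ≤ n) {G : Fin n → Fin n → Prop} (hG : ∀ i, ¬G i i)
    (hnc : ¬∀ u v : Fin n, u ≠ v → G u v) :
    ∃ e : Equiv.Perm (Fin n), ∀ a b, G a b → Knkm n (n - 2) 1 (e a) (e b) := by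
  simp only [not_forall] at hnc
  obtain ⟨u, v, huv, hGuv⟩ := hnc
  obtain ⟨e, heu, hev⟩ := Equiv.Perm.exists_apply_eq_and_apply_eq huv
    (show (⟨n - 1, by omega⟩ : Fin n) ≠ ⟨0, by omega⟩ from fun h => by
      rw [Fin.ext_iff] at h; simp only at h; omega)
  refine ⟨e, fun a b hab => (Knkm_sub_two_one_iff hn).2 ⟨?_, fun ⟨ha, hb⟩ => hGuv ?_⟩⟩
  · exact e.injective.ne fun h => hG a (h ▸ hab)
  · rwa [e.injective (heu.trans (Fin.ext ha.symm)), e.injective (hev.trans (Fin.ext hb.symm))]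

/-- The eigenvector of `A_α(K(n,n-2,1))` is constant off the vertex `n - 1`, so its eigenvalue is
the larger root of the characteristic polynomial of the `2 × 2` quotient matrix. -/
noncomputable def lamAlphaKnkm (n : ℕ) (α : ℝ) : ℝ :=
  ((n : ℝ) + α * n - 2 - α +
    Real.sqrt ((1 - α) ^ 2 * (n : ℝ) ^ 2 + 2 * α * (1 - α) * n + α ^ 2 + 4 * α - 4)) / 2

theorem lamAlphaKnkm_isRoot {n : ℕ} (hn : 3 ≤ n) {α : ℝ} (hα1 : α ≤ 1) :
    lamAlphaKnkm n α ^ 2 - (n + α * n - 2 - α) * lamAlphaKnkm n α + (α * n - 1) * (n - 2) = 0 := by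
  have hn' : (3 : ℝ) ≤ n := by exact_mod_cast hn
  have hD : 0 ≤ (1 - α) ^ 2 * (n : ℝ) ^ 2 + 2 * α * (1 - α) * n + α ^ 2 + 4 * α - 4 := by
    nlinarith [mul_nonneg (sub_nonneg.2 hα1) (by linarith : (0:ℝ) ≤ n - 3), sq_nonneg (2 * α - 1)]
  rw [lamAlphaKnkm]
  linear_combination (1 / 4) * Real.sq_sqrt hD

theorem mul_sub_two_lt_lamAlphaKnkm {n : ℕ} (hn : 3 ≤ n) {α : ℝ} (hα1 : α ≤ 1) :
    α * (n - 2) < lamAlphaKnkm n α := by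
  have hn' : (3 : ℝ) ≤ n := by exact_mod_cast hn
  have := Real.sqrt_nonneg ((1 - α) ^ 2 * (n : ℝ) ^ 2 + 2 * α * (1 - α) * n + α ^ 2 + 4 * α - 4)
  rw [lamAlphaKnkm]
  nlinarith [mul_nonneg (sub_nonneg.2 hα1) (by linarith : (0:ℝ) ≤ n - 3)]

theorem exists_pos_mulVec_Aalpha_Knkm_eq_smul {n : ℕ} (hn : 3 ≤ n) {α : ℝ} (hα1 : α < 1) :
    ∃ y : Fin n → ℝ, (∀ i, 0 < y i) ∧ Aalpha α (Knkm n (n - 2) 1) *ᵥ y = lamAlphaKnkm n α • y := by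
  refine ⟨_, fun i => ?_, Aalpha_Knkm_mulVec_eq_smul hn (lamAlphaKnkm_isRoot hn hα1.le)⟩
  have hn' : (3 : ℝ) ≤ n := by exact_mod_cast hn
  have : 0 < 1 - α := sub_pos.2 hα1
  split_ifs
  · exact mul_pos this (by linarith)
  · exact sub_pos.2 (mul_sub_two_lt_lamAlphaKnkm hn hα1.le)

/-- `K(n,n-2,1)` (the complete digraph minus one arc) is the unique digraph
achieving the second maximum `A_α` spectral radius among strongly connected digraphs
on `n` vertices, and the value of this spectral radius. -/
theorem stmt16 {n : ℕ} (hn : 3 ≤ n) (α : ℝ) (hα0 : 0 ≤ α) (hα1 : α < 1) :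
    lamAlpha α (Knkm n (n - 2) 1) =
      ((n : ℝ) + α * n - 2 - α +
        Real.sqrt ((1 - α) ^ 2 * (n : ℝ) ^ 2 + 2 * α * (1 - α) * n +
          α ^ 2 + 4 * α - 4)) / 2 ∧
    ∀ G : Fin n → Fin n → Prop, (∀ i, ¬ G i i) → SConn G →
      ¬(∀ u v : Fin n, u ≠ v → G u v) →
      lamAlpha α G ≤ lamAlpha α (Knkm n (n - 2) 1) ∧
      (lamAlpha α G = lamAlpha α (Knkm n (n - 2) 1) ↔
        DIso G (Knkm n (n - 2) 1)) := by
  set K := Knkm n (n - 2) 1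
  have : Nonempty (Fin n) := ⟨⟨0, by omega⟩⟩
  obtain ⟨y, hy, hKy⟩ := exists_pos_mulVec_Aalpha_Knkm_eq_smul hn hα1
  have hlamK : lamAlpha α K = lamAlphaKnkm n α :=
    le_antisymm (specRad_le_of_le (Aalpha_nonneg hα0 hα1.le K) (fun _ _ => le_rfl) hy hKy)
      (le_specRad_of_mulVec_eq_smul (fun h => (hy ⟨0, by omega⟩).ne' (congrFun h _)) hKy)
  refine ⟨hlamK, fun G hG _ hnc => ?_⟩
  obtain ⟨e, he⟩ := exists_perm_map_Knkm (by omega) hG hnc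
  set G' : Fin n → Fin n → Prop := fun a b => G (e.symm a) (e.symm b)
  have hGG' : lamAlpha α G = lamAlpha α G' := by
    rw [← lamAlpha_comp_perm α G' e]
    simp [G']
  have hG'K : ∀ i j, Aalpha α G' i j ≤ Aalpha α K i j :=
    Aalpha_mono hα0 hα1.le fun a b h => by simpa using he _ _ h
  refine ⟨hGG' ▸ hlamK ▸ specRad_le_of_le (Aalpha_nonneg hα0 hα1.le G') hG'K hy hKy,
    fun h => ?_, fun hiso => hiso.lamAlpha_eq⟩
  have hG'eqK : G' = K := eq_of_Aalpha_eq hα1.ne (fun _ => hG _) (fun _ h => h.1 rfl)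
    (eq_of_le_of_specRad_eq (Aalpha_nonneg hα0 hα1.le G') hG'K hy hKy
      (irred_Aalpha hα0 hα1 (sConn_Knkm hn)) (hGG'.symm.trans (h.trans hlamK)))
  exact ⟨e, fun a b => by simp [← hG'eqK, G']⟩
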